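/- For every integer k ≥ 0 and every n ≥ 0, S_k(n) equals the number of pairs (w,c) where w : {0,…,n−1} → ℤ² is a walk with each step w(i) in {(1,0),(0,1),(−1,0),(0,−1),(1,−1),(−1,1),(0,0)}, every partial sum p_m = Σ_{i<m} w(i) (0 ≤ m ≤ n) lies in the quadrant {(x,y) ∈ ℤ² : x ≥ 0, y ≥ 0}, the total sum p_n = (0,0), and c assigns to each index i with w(i) = (0,0) a colour in {1,…,k}. -/

import Mathlib

open scoped BigOperators

/-- The Laurent monomial `xᵃyᵇ` in `ℤ[x,x⁻¹,y,y⁻¹]`. -/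
noncomputable def mono (a b : ℤ) : AddMonoidAlgebra ℤ (ℤ × ℤ) := AddMonoidAlgebra.single (a, b) 1

/-- `K_k = k + x + y + x⁻¹ + y⁻¹ + xy⁻¹ + yx⁻¹`. -/
noncomputable def Kq (k : ℕ) : AddMonoidAlgebra ℤ (ℤ × ℤ) :=
  AddMonoidAlgebra.single (0, 0) (k : ℤ)
  + mono 1 0 + mono 0 1 + mono (-1) 0 + mono 0 (-1) + mono 1 (-1) + mono (-1) 1

/-- `W = 1 − x²y⁻¹ + x³ − x²y² + y³ − y²x⁻¹`. -/
noncomputable def Wq : AddMonoidAlgebra ℤ (ℤ × ℤ) :=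
  mono 0 0 - mono 2 (-1) + mono 3 0 - mono 2 2 + mono 0 3 - mono (-1) 2

/-- `S_k(n)` is the constant term (coefficient of `x⁰y⁰`) of `W·K_kⁿ`. -/
noncomputable def Sq (k : ℕ) (n : ℕ) : ℤ := (Wq * Kq k ^ n).coeff (0, 0)

/-- The `m`-th partial sum `p_m = Σ_{i<m} w(i)` of a walk `w : Fin n → ℤ²`. -/
def partialSum {n : ℕ} (w : Fin n → ℤ × ℤ) (m : ℕ) : ℤ × ℤ :=
  ∑ i ∈ Finset.univ.filter (fun i : Fin n => (i : ℕ) < m), w i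

/-- A quadrant walk of length `n` from `(0,0)` to `(0,0)`: steps in
`{(1,0),(0,1),(−1,0),(0,−1),(1,−1),(−1,1),(0,0)}`, all partial sums in the quadrant
`{(x,y) : x ≥ 0, y ≥ 0}`, and total sum `(0,0)`. -/
def IsQuadrantWalk {n : ℕ} (w : Fin n → ℤ × ℤ) : Prop :=
  (∀ i, w i ∈ ({(1, 0), (0, 1), (-1, 0), (0, -1), (1, -1), (-1, 1), (0, 0)} : Set (ℤ × ℤ))) ∧
  (∀ m ≤ n, (partialSum w m).1 ≥ 0 ∧ (partialSum w m).2 ≥ 0) ∧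
  partialSum w n = (0, 0)

/-! Reflection principle. The step set of `K_k` is invariant under the reflections
`(a, b) ↦ (-a, a + b)` and `(a, b) ↦ (a + b, -b)`, which generate the Weyl group of `A₂`.
Multiplying `K_kⁿ` by the Weyl denominator `Δ = Σ_σ sign(σ) x^{σρ}`, `ρ = (1, 1)`, gives an
antisymmetric Laurent polynomial, whose coefficients vanish on the walls `a = 0` and `b = 0`.
Hence `p ↦ [x^{p+ρ}] Δ K_kⁿ` obeys the step recursion of walks confined to the quadrant, with
the boundary killed, and so counts quadrant walks from `0` to `p`, a zero step being counted `k`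
times. Finally `W` is `x^{-ρ} Δ` with all exponents negated, which `K_k` does not see, so
`S_k(n) = [x^ρ] Δ K_kⁿ`. -/

open AddMonoidAlgebra Set

section Walks

variable {n : ℕ}

@[simp]
lemma partialSum_zero (w : Fin n → ℤ × ℤ) : partialSum w 0 = 0 := by
  simp [partialSum]

lemma partialSum_snoc_of_le (w : Fin n → ℤ × ℤ) (s : ℤ × ℤ) {m : ℕ} (hm : m ≤ n) :
    partialSum (Fin.snoc w s : Fin (n + 1) → ℤ × ℤ) m = partialSum w m := by
  simp [partialSum, Finset.sum_filter, Fin.sum_univ_castSucc, Nat.not_lt.mpr hm]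

lemma partialSum_snoc_last (w : Fin n → ℤ × ℤ) (s : ℤ × ℤ) :
    partialSum (Fin.snoc w s : Fin (n + 1) → ℤ × ℤ) (n + 1) = partialSum w n + s := by
  simp [partialSum, Finset.sum_filter, Fin.sum_univ_castSucc]

def IsWalkIn (S : Set (ℤ × ℤ)) (w : Fin n → ℤ × ℤ) (p : ℤ × ℤ) : Prop :=
  (∀ m ≤ n, partialSum w m ∈ S) ∧ partialSum w n = p

lemma IsWalkIn.mem {S : Set (ℤ × ℤ)} {w : Fin n → ℤ × ℤ} {p : ℤ × ℤ} (h : IsWalkIn S w p) :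
    p ∈ S :=
  h.2 ▸ h.1 n le_rfl

lemma isWalkIn_fin_zero_iff {S : Set (ℤ × ℤ)} {p : ℤ × ℤ} (w : Fin 0 → ℤ × ℤ) :
    IsWalkIn S w p ↔ p ∈ S ∧ p = 0 := by
  simp only [IsWalkIn, nonpos_iff_eq_zero, forall_eq, partialSum_zero]
  constructor <;> rintro ⟨h, rfl⟩ <;> exact ⟨h, rfl⟩

lemma isWalkIn_snoc_iff {S : Set (ℤ × ℤ)} {p : ℤ × ℤ} (w : Fin n → ℤ × ℤ) (s : ℤ × ℤ) :
    IsWalkIn S (Fin.snoc w s : Fin (n + 1) → ℤ × ℤ) p ↔ p ∈ S ∧ IsWalkIn S w (p - s) := by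
  simp only [IsWalkIn, partialSum_snoc_last, eq_sub_iff_add_eq]
  constructor
  · rintro ⟨hS, rfl⟩
    refine ⟨by simpa [partialSum_snoc_last] using hS (n + 1) le_rfl, fun m hm => ?_, rfl⟩
    simpa [partialSum_snoc_of_le w s hm] using hS m (by omega)
  · rintro ⟨hp, hS, rfl⟩
    refine ⟨fun m hm => ?_, rfl⟩
    rcases Nat.lt_or_ge n m with h | h
    · simpa [show m = n + 1 by omega, partialSum_snoc_last] using hp
    · simpa [partialSum_snoc_of_le w s h] using hS m h

end Walks

section Counting

variable {ι : Type*} (step : ι → ℤ × ℤ) {S : Set (ℤ × ℤ)}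

lemma card_isWalkIn_of_notMem {n : ℕ} {p : ℤ × ℤ} (hp : p ∉ S) :
    Nat.card {v : Fin n → ι // IsWalkIn S (step ∘ v) p} = 0 :=
  Nat.card_eq_zero.mpr (Or.inl ⟨fun v => hp v.2.mem⟩)

lemma card_isWalkIn_fin_zero {p : ℤ × ℤ} (hp : p ∈ S) :
    Nat.card {v : Fin 0 → ι // IsWalkIn S (step ∘ v) p} = if p = 0 then 1 else 0 := by
  simp only [isWalkIn_fin_zero_iff, hp, true_and]
  split_ifs with h
  · rw [Nat.card_congr (Equiv.subtypeUnivEquiv fun _ => h), Nat.card_unique]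
  · exact Nat.card_eq_zero.mpr (Or.inl ⟨fun v => h v.2⟩)

lemma card_isWalkIn_succ [Fintype ι] {n : ℕ} {p : ℤ × ℤ} (hp : p ∈ S) :
    Nat.card {v : Fin (n + 1) → ι // IsWalkIn S (step ∘ v) p}
      = ∑ i, Nat.card {v : Fin n → ι // IsWalkIn S (step ∘ v) (p - step i)} := by
  rw [← Nat.card_sigma, ← Nat.card_congr (Equiv.subtypeProdEquivSigmaSubtype _)]
  refine Nat.card_congr (Equiv.subtypeEquiv (Fin.snocEquiv fun _ => ι).symm fun v => ?_)
  conv_lhs => rw [← Fin.snoc_init_self v, Fin.comp_snoc, isWalkIn_snoc_iff]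
  simp [hp]

theorem eq_card_isWalkIn [Fintype ι] (f : ℕ → ℤ × ℤ → ℤ)
    (zero : ∀ p ∈ S, f 0 p = if p = 0 then 1 else 0)
    (succ : ∀ n, ∀ p ∈ S, f (n + 1) p = ∑ i, f n (p - step i))
    (boundary : ∀ n, ∀ p ∈ S, ∀ i, p - step i ∉ S → f n (p - step i) = 0) (n : ℕ) :
    ∀ p ∈ S, f n p = Nat.card {v : Fin n → ι // IsWalkIn S (step ∘ v) p} := by
  induction n with
  | zero =>
    intro p hp
    rw [zero p hp, card_isWalkIn_fin_zero step hp]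
    split_ifs <;> rfl
  | succ n ih =>
    intro p hp
    rw [succ n p hp, card_isWalkIn_succ step hp]
    push_cast
    refine Finset.sum_congr rfl fun i _ => ?_
    by_cases hi : p - step i ∈ S
    · exact ih _ hi
    · rw [boundary n p hp i hi, card_isWalkIn_of_notMem step hi, Nat.cast_zero]

end Counting

lemma coeff_eq_zero_of_domCongr_eq_neg {R M : Type*} [Ring R] [IsAddTorsionFree R] [AddMonoid M]
    {e : M ≃+ M} {f : AddMonoidAlgebra R M} (hf : domCongr ℤ R e f = -f) {m : M} (hm : e m = m) :
    f.coeff m = 0 := by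
  have h := congrArg (fun g => g.coeff m) hf
  simp only [coeff_domCongr, coeff_neg, Finsupp.neg_apply, e.symm_apply_eq.mpr hm.symm] at h
  exact self_eq_neg.mp h

def reflFst : ℤ × ℤ ≃+ ℤ × ℤ where
  toFun p := (-p.1, p.1 + p.2)
  invFun p := (-p.1, p.1 + p.2)
  left_inv _ := by ext <;> simp
  right_inv _ := by ext <;> simp
  map_add' _ _ := by ext <;> simp <;> abel

def reflSnd : ℤ × ℤ ≃+ ℤ × ℤ where
  toFun p := (p.1 + p.2, -p.2)
  invFun p := (p.1 + p.2, -p.2)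
  left_inv _ := by ext <;> simp
  right_inv _ := by ext <;> simp
  map_add' _ _ := by ext <;> simp <;> abel

@[simp] lemma reflFst_apply (a b : ℤ) : reflFst (a, b) = (-a, a + b) := rfl
@[simp] lemma reflSnd_apply (a b : ℤ) : reflSnd (a, b) = (a + b, -b) := rfl

/-- The Weyl denominator `Σ_σ sign(σ) x^{σρ}` of `A₂`, `ρ = (1, 1)`. -/
noncomputable def weylDenom : AddMonoidAlgebra ℤ (ℤ × ℤ) :=
  mono 1 1 - mono (-1) 2 - mono 2 (-1) + mono (-2) 1 + mono 1 (-2) - mono (-1) (-1)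

lemma domCongr_reflFst_Kq (k : ℕ) : domCongr ℤ ℤ reflFst (Kq k) = Kq k := by
  simp only [Kq, mono, map_add, domCongr_single]
  norm_num
  abel

lemma domCongr_reflSnd_Kq (k : ℕ) : domCongr ℤ ℤ reflSnd (Kq k) = Kq k := by
  simp only [Kq, mono, map_add, domCongr_single]
  norm_num
  abel

lemma domCongr_neg_Kq (k : ℕ) : domCongr ℤ ℤ (AddEquiv.neg _) (Kq k) = Kq k := by
  simp only [Kq, mono, map_add, domCongr_single, AddEquiv.neg_apply, Prod.neg_mk]
  norm_num
  abel

lemma domCongr_reflFst_weylDenom : domCongr ℤ ℤ reflFst weylDenom = -weylDenom := by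
  simp only [weylDenom, mono, map_add, map_sub, domCongr_single]
  norm_num
  abel

lemma domCongr_reflSnd_weylDenom : domCongr ℤ ℤ reflSnd weylDenom = -weylDenom := by
  simp only [weylDenom, mono, map_add, map_sub, domCongr_single]
  norm_num
  abel

lemma domCongr_neg_Wq : domCongr ℤ ℤ (AddEquiv.neg _) Wq = single (-1, -1) 1 * weylDenom := by
  simp only [Wq, weylDenom, mono, map_add, map_sub, domCongr_single, AddEquiv.neg_apply,
    Prod.neg_mk, mul_add, mul_sub, single_mul_single]
  norm_num
  abel

lemma domCongr_weylDenom_mul_Kq_pow {k n : ℕ} {e : ℤ × ℤ ≃+ ℤ × ℤ}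
    (hW : domCongr ℤ ℤ e weylDenom = -weylDenom) (hK : domCongr ℤ ℤ e (Kq k) = Kq k) :
    domCongr ℤ ℤ e (weylDenom * Kq k ^ n) = -(weylDenom * Kq k ^ n) := by
  rw [map_mul, map_pow, hW, hK, neg_mul]

lemma coeff_weylDenom_mul_Kq_pow_eq_zero (k n : ℕ) {p : ℤ × ℤ} (hp : p.1 = 0 ∨ p.2 = 0) :
    (weylDenom * Kq k ^ n).coeff p = 0 := by
  obtain ⟨a, b⟩ := p
  rcases hp with rfl | rfl
  · exact coeff_eq_zero_of_domCongr_eq_neg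
      (domCongr_weylDenom_mul_Kq_pow domCongr_reflFst_weylDenom (domCongr_reflFst_Kq k))
      (by simp)
  · exact coeff_eq_zero_of_domCongr_eq_neg
      (domCongr_weylDenom_mul_Kq_pow domCongr_reflSnd_weylDenom (domCongr_reflSnd_Kq k))
      (by simp)

lemma Sq_eq_coeff_weylDenom_mul_Kq_pow (k n : ℕ) :
    Sq k n = (weylDenom * Kq k ^ n).coeff (1, 1) := by
  have h := coeff_domCongr (R := ℤ) (A := ℤ) (AddEquiv.neg (ℤ × ℤ)) (Wq * Kq k ^ n) 0
  rw [map_mul, map_pow, domCongr_neg_Wq, domCongr_neg_Kq, mul_assoc, coeff_single_mul_apply] at h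
  rw [Sq, Prod.mk_zero_zero]
  simpa using h.symm

def nonzeroSteps : Finset (ℤ × ℤ) := {(1, 0), (0, 1), (-1, 0), (0, -1), (1, -1), (-1, 1)}

abbrev ColouredStep (k : ℕ) := nonzeroSteps ⊕ Fin k

def ColouredStep.toStep {k : ℕ} : ColouredStep k → ℤ × ℤ := Sum.elim Subtype.val fun _ => 0

@[simp] lemma ColouredStep.toStep_inl {k : ℕ} (s : nonzeroSteps) :
    ColouredStep.toStep (Sum.inl s : ColouredStep k) = s := rfl

@[simp] lemma ColouredStep.toStep_inr {k : ℕ} (c : Fin k) :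
    ColouredStep.toStep (Sum.inr c : ColouredStep k) = 0 := rfl

lemma Kq_eq_sum (k : ℕ) : Kq k = ∑ s : ColouredStep k, single s.toStep 1 := by
  simp only [Fintype.sum_sum_type, ColouredStep.toStep_inl, ColouredStep.toStep_inr]
  rw [Finset.sum_coe_sort nonzeroSteps (fun s => single s (1 : ℤ))]
  simp [Finset.sum_insert, nonzeroSteps, Kq, mono, Prod.mk_zero_zero]
  abel

lemma coeff_mul_Kq (k : ℕ) (f : AddMonoidAlgebra ℤ (ℤ × ℤ)) (p : ℤ × ℤ) :
    (f * Kq k).coeff p = ∑ s : ColouredStep k, f.coeff (p - s.toStep) := by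
  rw [Kq_eq_sum, Finset.mul_sum, coeff_sum, Finsupp.finsetSum_apply]
  simp [sub_eq_add_neg]

lemma ColouredStep.toStep_le {k : ℕ} (s : ColouredStep k) : s.toStep ≤ (1, 1) := by
  rcases s with ⟨s, hs⟩ | c
  · simp only [nonzeroSteps, Finset.mem_insert, Finset.mem_singleton] at hs
    rcases hs with rfl | rfl | rfl | rfl | rfl | rfl <;> simp [Prod.mk_le_mk]
  · simp [Prod.le_def]

theorem coeff_weylDenom_mul_Kq_pow_eq_card (k n : ℕ) {p : ℤ × ℤ} (hp : p ∈ Ici 0) :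
    (weylDenom * Kq k ^ n).coeff (p + (1, 1))
    = Nat.card {v : Fin n → ColouredStep k // IsWalkIn (Ici 0) (ColouredStep.toStep ∘ v) p} := by
  refine eq_card_isWalkIn ColouredStep.toStep
    (fun n p => (weylDenom * Kq k ^ n).coeff (p + (1, 1)))
    (fun p hp => ?_) (fun n p _ => ?_) (fun n p hp s hs => ?_) n p hp
  · obtain ⟨a, b⟩ := p
    simp only [Set.mem_Ici, Prod.le_def, Prod.fst_zero, Prod.snd_zero] at hp
    simp [weylDenom, mono, Finsupp.single_apply]
    split_ifs <;> omega
  · simp only [pow_succ, ← mul_assoc, coeff_mul_Kq, sub_add_eq_add_sub]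
  · -- a step lowers each coordinate by at most one, so it can only leave the quadrant
    -- through a wall of the shifted quadrant
    apply coeff_weylDenom_mul_Kq_pow_eq_zero
    have := s.toStep_le
    simp only [Set.mem_Ici, Prod.le_def, Prod.fst_zero, Prod.snd_zero, Prod.fst_sub,
      Prod.snd_sub] at hp hs this
    simp only [Prod.fst_add, Prod.snd_add, Prod.fst_sub, Prod.snd_sub]
    omega

lemma isQuadrantWalk_iff {n : ℕ} (w : Fin n → ℤ × ℤ) :
    IsQuadrantWalk w ↔
      (∀ i, w i ∈ ({(1, 0), (0, 1), (-1, 0), (0, -1), (1, -1), (-1, 1), (0, 0)} : Set (ℤ × ℤ))) ∧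
        IsWalkIn (Ici 0) w 0 := by
  simp [IsQuadrantWalk, IsWalkIn, Prod.le_def, Prod.mk_zero_zero]

lemma ColouredStep.toStep_mem {k : ℕ} (s : ColouredStep k) :
    s.toStep ∈ ({(1, 0), (0, 1), (-1, 0), (0, -1), (1, -1), (-1, 1), (0, 0)} : Set (ℤ × ℤ)) := by
  rcases s with ⟨s, hs⟩ | c
  · simp only [nonzeroSteps, Finset.mem_insert, Finset.mem_singleton] at hs
    simp only [toStep_inl, Set.mem_insert_iff, Set.mem_singleton_iff]
    tauto
  · simp [Prod.mk_zero_zero]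

lemma mem_nonzeroSteps_of_mem {s : ℤ × ℤ}
    (hs : s ∈ ({(1, 0), (0, 1), (-1, 0), (0, -1), (1, -1), (-1, 1), (0, 0)} : Set (ℤ × ℤ)))
    (h0 : s ≠ (0, 0)) : s ∈ nonzeroSteps := by
  simp only [Set.mem_insert_iff, Set.mem_singleton_iff] at hs
  simp only [nonzeroSteps, Finset.mem_insert, Finset.mem_singleton]
  tauto

def ColouredStep.colour {k : ℕ} : (s : ColouredStep k) → s.toStep = (0, 0) → Fin k
  | .inl s, h => absurd s.2 (by rw [show (s : ℤ × ℤ) = (0, 0) from h]; decide)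
  | .inr c, _ => c

lemma ColouredStep.inr_colour {k : ℕ} (s : ColouredStep k) (h : s.toStep = (0, 0)) :
    .inr (s.colour h) = s := by
  rcases s with ⟨s, hs⟩ | c
  · obtain rfl : s = (0, 0) := h
    exact absurd hs (by decide)
  · rfl

lemma ColouredStep.inl_toStep {k : ℕ} (s : ColouredStep k) (h : s.toStep ≠ (0, 0))
    (hs : s.toStep ∈ nonzeroSteps) : .inl ⟨s.toStep, hs⟩ = s := by
  rcases s with s | c
  · rfl
  · exact absurd rfl h

def wordOfColouredWalk {k n : ℕ}
    (x : (w : {w : Fin n → ℤ × ℤ // IsQuadrantWalk w}) × ({i : Fin n // w.1 i = (0, 0)} → Fin k)) :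
    Fin n → ColouredStep k := fun i =>
  if h : x.1.1 i = (0, 0) then .inr (x.2 ⟨i, h⟩)
  else .inl ⟨x.1.1 i, mem_nonzeroSteps_of_mem (x.1.2.1 i) h⟩

lemma toStep_comp_wordOfColouredWalk {k n : ℕ}
    (x : (w : {w : Fin n → ℤ × ℤ // IsQuadrantWalk w}) × ({i : Fin n // w.1 i = (0, 0)} → Fin k)) :
    ColouredStep.toStep ∘ wordOfColouredWalk x = x.1.1 := by
  funext i
  simp only [Function.comp_apply, wordOfColouredWalk]
  split_ifs with h
  exacts [h.symm, rfl]

lemma card_colouredQuadrantWalks (k n : ℕ) :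
    Nat.card ((w : {w : Fin n → ℤ × ℤ // IsQuadrantWalk w}) ×
      ({i : Fin n // w.1 i = (0, 0)} → Fin k))
    = Nat.card {v : Fin n → ColouredStep k // IsWalkIn (Ici 0) (ColouredStep.toStep ∘ v) 0} := by
  refine Nat.card_eq_of_bijective (fun x => ⟨wordOfColouredWalk x,
      (toStep_comp_wordOfColouredWalk x).symm ▸ ((isQuadrantWalk_iff _).mp x.1.2).2⟩)
    ⟨fun x y hxy => ?_, fun v => ?_⟩
  · obtain ⟨⟨w, hw⟩, c⟩ := x
    obtain ⟨⟨w', hw'⟩, c'⟩ := y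
    have hv : wordOfColouredWalk ⟨⟨w, hw⟩, c⟩ = wordOfColouredWalk ⟨⟨w', hw'⟩, c'⟩ :=
      congrArg Subtype.val hxy
    obtain rfl : w = w' := by
      have h := toStep_comp_wordOfColouredWalk ⟨⟨w, hw⟩, c⟩
      rw [hv, toStep_comp_wordOfColouredWalk] at h
      exact h.symm
    obtain rfl : c = c' := by
      funext ⟨i, hi⟩
      have h := congrFun hv i
      simp only [wordOfColouredWalk, dif_pos hi] at h
      exact Sum.inr_injective h
    rfl
  · refine ⟨⟨⟨ColouredStep.toStep ∘ v.1,
      (isQuadrantWalk_iff _).mpr ⟨fun i => (v.1 i).toStep_mem, v.2⟩⟩, fun i => (v.1 i).colour i.2⟩,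
      Subtype.ext (funext fun i => ?_)⟩
    simp only [wordOfColouredWalk, Function.comp_apply]
    split_ifs with h
    · exact (v.1 i).inr_colour h
    · exact (v.1 i).inl_toStep h _

/-- For every `k ≥ 0` and `n ≥ 0`, `S_k(n)` counts pairs `(w,c)` where `w` is a quadrant
walk of length `n` from the origin to the origin and `c` assigns one of `k` colours to
each zero step of `w`. -/
theorem Sq_eq_card_colouredQuadrantWalks (k n : ℕ) :
    Sq k n = (Nat.card ((w : {w : Fin n → ℤ × ℤ // IsQuadrantWalk w}) ×
      ({i : Fin n // w.1 i = (0, 0)} → Fin k)) : ℤ) := by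
  rw [card_colouredQuadrantWalks, Sq_eq_coeff_weylDenom_mul_Kq_pow,
    ← coeff_weylDenom_mul_Kq_pow_eq_card k n self_mem_Ici, zero_add]
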